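/- Let p be an odd prime, m a positive integer, and let s be an integer with 0 ≤ s ≤ m such that m+s is even and m+s ≥ 4. Let f : F_q → F_p be a weakly regular s-plateaued function with f(0) = 0 and sign ε, which is balanced (W_f(0) = 0), and set ε̄ = ε·((−1)^{(p−1)/2})^{(m+s)/2}. Then the extended code C̄_f' has length p^m + m + 2 and dimension m + 2, and its minimum distance is at least p^m − p^{m−1} − (p−1)·p^{(m+s)/2−1} + 2 if ε̄ = 1, and at least p^m − p^{m−1} − p^{(m+s)/2−1} + 2 if ε̄ = −1. -/

import Mathlib

open Finset

noncomputable section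

/-- ζ_p = exp(2πi/p). -/
def zetaP (p : ℕ) : ℂ := Complex.exp (2 * Real.pi * Complex.I / p)

/-- ζ_p^a for a ∈ F_p. -/
def eChar (p : ℕ) (a : ZMod p) : ℂ := zetaP p ^ a.val

/-- Walsh transform of f : F_q → F_p : W_f(β) = Σ_x ζ_p^{f(x) − Tr(βx)}. -/
def walsh (p : ℕ) (F : Type) [Field F] [Fintype F] [Algebra (ZMod p) F]
    (f : F → ZMod p) (β : F) : ℂ :=
  ∑ x : F, eChar p (f x - Algebra.trace (ZMod p) F (β * x))

/-- √p* = √p if p ≡ 1 (mod 4), and i√p if p ≡ 3 (mod 4). -/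
def sqrtPStar (p : ℕ) : ℂ :=
  if p % 4 = 1 then ((Real.sqrt p : ℝ) : ℂ) else Complex.I * ((Real.sqrt p : ℝ) : ℂ)

/-- f is s-plateaued: |W_f(β)|² ∈ {0, p^{m+s}} for all β. -/
def IsPlateaued (p m s : ℕ) (F : Type) [Field F] [Fintype F] [Algebra (ZMod p) F]
    (f : F → ZMod p) : Prop :=
  ∀ β : F, Complex.normSq (walsh p F f β) = 0 ∨
    Complex.normSq (walsh p F f β) = (p : ℝ) ^ (m + s)

/-- Walsh support S_f = {β : |W_f(β)|² = p^{m+s}}. -/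
def walshSupp (p m s : ℕ) (F : Type) [Field F] [Fintype F] [Algebra (ZMod p) F]
    (f : F → ZMod p) : Set F :=
  {β : F | Complex.normSq (walsh p F f β) = (p : ℝ) ^ (m + s)}

/-- f is weakly regular s-plateaued with sign ε and dual function f^*. -/
def IsWeaklyRegularPlateaued (p m s : ℕ) (F : Type) [Field F] [Fintype F]
    [Algebra (ZMod p) F] (f : F → ZMod p) (ε : ℤ) (fstar : F → ZMod p) : Prop :=
  IsPlateaued p m s F f ∧ (ε = 1 ∨ ε = -1) ∧
  (∀ β : F, β ∉ walshSupp p m s F f → fstar β = 0) ∧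
  (∀ β ∈ walshSupp p m s F f,
    walsh p F f β = (ε : ℂ) * sqrtPStar p ^ (m + s) * eChar p (fstar β))

/-- Walsh transform of a Boolean function, with values in ℤ. -/
def walsh2 (F : Type) [Field F] [Fintype F] [Algebra (ZMod 2) F]
    (f : F → ZMod 2) (β : F) : ℤ :=
  ∑ x : F, (-1 : ℤ) ^ ((f x + Algebra.trace (ZMod 2) F (β * x)).val)

/-- A Boolean function is s-plateaued: W_f(β)² ∈ {0, 2^{m+s}} for all β. -/
def IsPlateaued2 (m s : ℕ) (F : Type) [Field F] [Fintype F] [Algebra (ZMod 2) F]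
    (f : F → ZMod 2) : Prop :=
  ∀ β : F, walsh2 F f β ^ 2 = 0 ∨ walsh2 F f β ^ 2 = 2 ^ (m + s)

/-- Hamming weight. -/
def wtH {n : Type} [Fintype n] {K : Type} [Zero K] [DecidableEq K] (v : n → K) : ℕ :=
  (Finset.univ.filter (fun i => v i ≠ 0)).card

/-- A code S has minimum distance d. -/
def hasMinDist {n : Type} [Fintype n] {K : Type} [Zero K] [DecidableEq K]
    (S : Set (n → K)) (d : ℕ) : Prop :=
  (∃ v ∈ S, v ≠ 0 ∧ wtH v = d) ∧ ∀ v ∈ S, v ≠ 0 → d ≤ wtH v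

/-- The dual code of a set of vectors. -/
def dualCode {n : Type} [Fintype n] {K : Type} [Field K] (S : Set (n → K)) :
    Submodule K (n → K) where
  carrier := {u : n → K | ∀ v ∈ S, ∑ i, u i * v i = 0}
  add_mem' := by
    intro u w hu hw v hv
    have h1 := hu v hv
    have h2 := hw v hv
    simp only [Pi.add_apply, add_mul, Finset.sum_add_distrib, h1, h2, add_zero]
  zero_mem' := by
    intro v hv
    simp
  smul_mem' := by
    intro c u hu v hv
    have h1 := hu v hv
    simp only [Pi.smul_apply, smul_eq_mul, mul_assoc, ← Finset.mul_sum, h1, mul_zero]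

/-- The code C̄_f = {(a f(x) + Tr(bx) + c)_{x ∈ F_q}}. -/
def codeCbar (p : ℕ) (F : Type) [Field F] [Fintype F] [Algebra (ZMod p) F]
    (f : F → ZMod p) : Set (F → ZMod p) :=
  {v : F → ZMod p | ∃ a c : ZMod p, ∃ b : F,
    v = fun x => a * f x + Algebra.trace (ZMod p) F (b * x) + c}

/-- The extended code C̄_f' ⊆ F_p^{m+2+q}: all vectors
(c, a, a_0, …, a_{m−1}, (a f(x) + Tr(bx) + a + c)_{x ∈ F_q}) with b = Σ a_i α^i. -/
def extCode (p m : ℕ) (F : Type) [Field F] [Fintype F] [Algebra (ZMod p) F]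
    (f : F → ZMod p) (α : F) : Set (Fin (m + 2) ⊕ F → ZMod p) :=
  {v | ∃ c a : ZMod p, ∃ aa : Fin m → ZMod p,
    v = Sum.elim (Fin.cons c (Fin.cons a aa))
      (fun x => a * f x +
        Algebra.trace (ZMod p) F ((∑ i : Fin m, aa i • α ^ (i : ℕ)) * x) + a + c)}

/-- The punctured code C_f^* indexed by the nonzero elements of F_q. -/
def codeCstar (p : ℕ) (F : Type) [Field F] [Fintype F] [Algebra (ZMod p) F]
    (f : F → ZMod p) : Set ({x : F // x ≠ 0} → ZMod p) :=
  {v | ∃ a : ZMod p, ∃ b : F,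
    v = fun x => a * f x.val + Algebra.trace (ZMod p) F (b * x.val)}

end

/-!
A nonzero codeword is `(c, a, aa, g)` with `g x = a f(x) + Tr(b x) + a + c` and `b = ∑ aa i α^i`;
its weight is the weight of the prefix `(c, a, aa)` plus `p^m` minus the number `Z` of zeros of `g`.
For `a ≠ 0` and `γ = -b/a`, `g x = 0` says that `f x - Tr(γ x)` takes one prescribed value.
Weak regularity gives `W_f(γ) = E ζ_p^t` with `E = ε̄ p^((m+s)/2)` on the Walsh support and
`E = 0` off it. As the only integer relation among `1, ζ_p, …, ζ_p^(p-1)` is that their sum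
vanishes, `f - Tr(γ ·)` takes every value `p^(m-1) - E/p` times, except `t`, which it takes `E`
times more often; this bounds `Z`. Balancedness keeps `0` off the support, so on the support
`b ≠ 0` and the prefix has weight at least `2`. For `a = 0` the word `g` is affine, and the linear
independence of `1, α, …, α^(m-1)` excludes a nonzero prefix with `g = 0`.
-/

section Characters

variable {p : ℕ} [Fact p.Prime]

lemma isPrimitiveRoot_zetaP : IsPrimitiveRoot (zetaP p) p :=
  Complex.isPrimitiveRoot_exp p (Fact.out : p.Prime).ne_zero

lemma eChar_eq_stdAddChar : eChar p = ZMod.stdAddChar := by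
  funext j
  rw [ZMod.stdAddChar_apply, ZMod.toCircle_apply, eChar, zetaP, ← Complex.exp_nat_mul]
  ring_nf

lemma sum_eChar_trace_mul_eq_zero {F : Type} [Field F] [Fintype F] [Algebra (ZMod p) F]
    {b : F} (hb : b ≠ 0) : ∑ x : F, eChar p (Algebra.trace (ZMod p) F (b * x)) = 0 := by
  let ψ : AddChar F ℂ := ZMod.stdAddChar.compAddMonoidHom
    ((Algebra.trace (ZMod p) F).toAddMonoidHom.comp (AddMonoidHom.mulLeft b))
  obtain ⟨z, hz⟩ := Algebra.trace_surjective (ZMod p) F 1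
  have hψ : ψ ≠ 1 := by
    rw [Ne, AddChar.eq_one_iff, not_forall]
    refine ⟨b⁻¹ * z, fun h => one_ne_zero (ZMod.injective_stdAddChar (N := p) ?_)⟩
    simpa [ψ, ← mul_assoc, mul_inv_cancel₀ hb, hz] using h
  simpa [ψ, eChar_eq_stdAddChar] using AddChar.sum_eq_zero_of_ne_one hψ

open Polynomial in
lemma coeff_cyclotomic_prime {n : ℕ} (hn : n < p) : (cyclotomic p ℚ).coeff n = 1 := by
  simp [cyclotomic_prime, coeff_X_pow, hn]

open Polynomial in
lemma eq_of_sum_mul_eChar_eq_zero (d : ZMod p → ℤ)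
    (h : ∑ j, (d j : ℂ) * eChar p j = 0) (i j : ZMod p) : d i = d j := by
  have hp : p.Prime := Fact.out
  let D : ℚ[X] := ∑ j : ZMod p, C (d j : ℚ) * X ^ j.val
  have hcoeff (j : ZMod p) : D.coeff j.val = d j := by
    simp [D, ZMod.val_injective p |>.eq_iff]
  have hroot : aeval (zetaP p) D = 0 := by
    simpa [D, eChar] using h
  obtain ⟨q, hq⟩ : cyclotomic p ℚ ∣ D := by
    rw [cyclotomic_eq_minpoly_rat isPrimitiveRoot_zetaP hp.pos]
    exact minpoly.dvd ℚ _ hroot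
  have hq0 : q.natDegree = 0 := by
    rcases eq_or_ne q 0 with rfl | hq0
    · rfl
    have hD : D.natDegree ≤ p - 1 := natDegree_sum_le_of_forall_le _ _ fun j _ =>
      (natDegree_C_mul_X_pow_le _ _).trans (Nat.le_pred_of_lt (ZMod.val_lt j))
    rw [hq, natDegree_mul (cyclotomic_ne_zero p ℚ) hq0, natDegree_cyclotomic,
      Nat.totient_prime hp] at hD
    omega
  obtain ⟨c, rfl⟩ : ∃ c, q = C c := ⟨_, eq_C_of_natDegree_eq_zero hq0⟩
  have hconst (j : ZMod p) : (d j : ℚ) = c := by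
    rw [← hcoeff, hq, coeff_mul_C, coeff_cyclotomic_prime (ZMod.val_lt j), one_mul]
  exact_mod_cast (hconst i).trans (hconst j).symm

end Characters

section ValueDistribution

variable {p : ℕ} [Fact p.Prime] {X : Type} [Fintype X]

lemma sum_eChar_eq_sum_card_fiber (φ : X → ZMod p) :
    ∑ x, eChar p (φ x) = ∑ j, (#{x | φ x = j} : ℂ) * eChar p j := by
  rw [← Finset.sum_fiberwise univ φ]
  refine Finset.sum_congr rfl fun j _ => ?_
  rw [Finset.sum_congr rfl fun x hx => by rw [(Finset.mem_filter.mp hx).2], Finset.sum_const,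
    nsmul_eq_mul]

lemma card_fiber_mul_eq_of_sum_eChar (φ : X → ZMod p) (E : ℤ) (t : ZMod p)
    (h : ∑ x, eChar p (φ x) = E * eChar p t) (j : ZMod p) :
    (#{x | φ x = j} : ℤ) * p = Fintype.card X + E * (if j = t then (p : ℤ) - 1 else -1) := by
  let d : ZMod p → ℤ := fun j => #{x | φ x = j} - if j = t then E else 0
  have hd : ∑ j, (d j : ℂ) * eChar p j = 0 := by
    simp only [d, Int.cast_sub, Int.cast_natCast, sub_mul, Finset.sum_sub_distrib,
      ← sum_eChar_eq_sum_card_fiber, h, apply_ite (Int.cast : ℤ → ℂ), ite_mul,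
      Int.cast_zero, zero_mul, Finset.sum_ite_eq', Finset.mem_univ, if_true, sub_self]
  have hfiber (j : ZMod p) : (#{x | φ x = j} : ℤ) = d 0 + if j = t then E else 0 := by
    rw [← eq_of_sum_mul_eChar_eq_zero d hd j 0, sub_add_cancel]
  have hcard : (Fintype.card X : ℤ) = p * d 0 + E := by
    rw [← Finset.card_univ, Finset.card_eq_sum_card_fiberwise (f := φ) (t := univ) (by simp),
      Nat.cast_sum]
    simp [hfiber, Finset.sum_add_distrib, ZMod.card]
  rw [hfiber, hcard]
  split_ifs <;> ring

end ValueDistribution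

section ZeroCounts

variable {p : ℕ} [Fact p.Prime] {F : Type} [Field F] [Fintype F] [Algebra (ZMod p) F]

lemma card_zeros_trace_mul_add {b : F} (hb : b ≠ 0) (c : ZMod p) :
    (#{x | Algebra.trace (ZMod p) F (b * x) + c = 0} : ℤ) * p = Fintype.card F := by
  have h : ∑ x : F, eChar p (Algebra.trace (ZMod p) F (b * x)) =
      ((0 : ℤ) : ℂ) * eChar p 0 := by
    rw [sum_eChar_trace_mul_eq_zero hb, Int.cast_zero, zero_mul]
  simpa [add_eq_zero_iff_eq_neg] using card_fiber_mul_eq_of_sum_eChar _ 0 0 h (-c)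

lemma card_zeros_mul_add_trace_mul_add (f : F → ZMod p) {a : ZMod p} (ha : a ≠ 0) (b : F)
    (d : ZMod p) (E : ℤ) (t : ZMod p) (hW : walsh p F f (-(a⁻¹ • b)) = E * eChar p t) :
    (#{x | a * f x + Algebra.trace (ZMod p) F (b * x) + d = 0} : ℤ) * p =
      Fintype.card F + E * (if -(a⁻¹ * d) = t then (p : ℤ) - 1 else -1) := by
  rw [← card_fiber_mul_eq_of_sum_eChar _ E t hW]
  congr 3
  ext x
  simp only [Finset.mem_filter, Finset.mem_univ, true_and]
  have htr : Algebra.trace (ZMod p) F (-(a⁻¹ • b) * x) =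
      -(a⁻¹ * Algebra.trace (ZMod p) F (b * x)) := by
    rw [neg_mul, smul_mul_assoc, map_neg, map_smul, smul_eq_mul]
  rw [htr, sub_neg_eq_add]
  constructor <;> intro h <;> field_simp at h ⊢ <;> linear_combination h

end ZeroCounts

section Plateaued

variable {p m s : ℕ} {F : Type} [Field F] [Fintype F] [Algebra (ZMod p) F]
  {f : F → ZMod p}

lemma sqrtPStar_sq [Fact p.Prime] (hp2 : p ≠ 2) :
    sqrtPStar p ^ 2 = (((-1 : ℤ) ^ ((p - 1) / 2) * p : ℤ) : ℂ) := by
  have hodd : p % 2 = 1 := Nat.odd_iff.mp ((Fact.out : p.Prime).odd_of_ne_two hp2)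
  have hsq : ((Real.sqrt p : ℝ) : ℂ) ^ 2 = p := by
    rw [← Complex.ofReal_pow, Real.sq_sqrt (Nat.cast_nonneg p), Complex.ofReal_natCast]
  by_cases h4 : p % 4 = 1
  · have : Even ((p - 1) / 2) := Nat.even_iff.mpr (by omega)
    rw [sqrtPStar, if_pos h4, hsq, this.neg_one_pow]
    simp
  · have : Odd ((p - 1) / 2) := Nat.odd_iff.mpr (by omega)
    rw [sqrtPStar, if_neg h4, mul_pow, hsq, Complex.I_sq, this.neg_one_pow]
    simp

lemma walsh_eq_of_mem_walshSupp [Fact p.Prime] (hp2 : p ≠ 2) {h : ℕ} (hh : m + s = 2 * h)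
    {ε : ℤ} {fstar : F → ZMod p} (hf : IsWeaklyRegularPlateaued p m s F f ε fstar) {β : F}
    (hβ : β ∈ walshSupp p m s F f) :
    walsh p F f β =
      ((ε * ((-1 : ℤ) ^ ((p - 1) / 2)) ^ h * p ^ h : ℤ) : ℂ) * eChar p (fstar β) := by
  rw [hf.2.2.2 β hβ, hh, pow_mul, sqrtPStar_sq hp2]
  push_cast
  ring

lemma walsh_eq_zero_of_notMem_walshSupp (hf : IsPlateaued p m s F f) {β : F}
    (hβ : β ∉ walshSupp p m s F f) : walsh p F f β = 0 :=
  Complex.normSq_eq_zero.mp ((hf β).resolve_right hβ)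

lemma zero_notMem_walshSupp [Fact p.Prime] (hbal : walsh p F f 0 = 0) :
    0 ∉ walshSupp p m s F f := by
  simp [walshSupp, hbal, (Fact.out : p.Prime).ne_zero, eq_comm]

lemma walsh_eq_zero_or_eq_mul_eChar [Fact p.Prime] (hp2 : p ≠ 2) {h : ℕ} (hh : m + s = 2 * h)
    {ε : ℤ} {fstar : F → ZMod p} (hf : IsWeaklyRegularPlateaued p m s F f ε fstar)
    (hbal : walsh p F f 0 = 0) (β : F) :
    walsh p F f β = 0 ∨ β ≠ 0 ∧ ∃ t, walsh p F f β =
      ((ε * ((-1 : ℤ) ^ ((p - 1) / 2)) ^ h * p ^ h : ℤ) : ℂ) * eChar p t := by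
  by_cases hβ : β ∈ walshSupp p m s F f
  · exact .inr ⟨by rintro rfl; exact zero_notMem_walshSupp hbal hβ, _,
      walsh_eq_of_mem_walshSupp hp2 hh hf hβ⟩
  · exact .inl (walsh_eq_zero_of_notMem_walshSupp hf.1 hβ)

end Plateaued

section HammingWeight

variable {ι κ K : Type} [Fintype ι] [Fintype κ] [Zero K] [DecidableEq K]

lemma wtH_sum_elim (u : ι → K) (w : κ → K) : wtH (Sum.elim u w) = wtH u + wtH w := by
  simp only [wtH, Finset.card_filter, Fintype.sum_sum_type, Sum.elim_inl, Sum.elim_inr]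
  rfl

lemma wtH_cons {n : ℕ} (x : K) (v : Fin n → K) :
    wtH (Fin.cons x v : Fin (n + 1) → K) = (if x = 0 then 0 else 1) + wtH v := by
  simp only [wtH, Finset.card_filter, Fin.sum_univ_succ, Fin.cons_zero, Fin.cons_succ, ite_not]

lemma wtH_add_card_zeros (v : ι → K) : wtH v + #{i | v i = 0} = Fintype.card ι := by
  rw [wtH, add_comm, Finset.card_filter_add_card_filter_not, Finset.card_univ]

lemma wtH_pos_iff {v : ι → K} : 0 < wtH v ↔ v ≠ 0 := by
  simp [wtH, Finset.card_pos, Finset.filter_nonempty_iff, Function.ne_iff]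

end HammingWeight

lemma pow_sub_pow_sub_add_two_le {p m h K w Z : ℕ} (hp : 0 < p) (hh : 1 ≤ h) (hhm : h ≤ m)
    (hK : 1 ≤ K) (hKp : K ≤ p - 1)
    (hZ : 1 ≤ w ∧ Z * p ≤ p ^ m ∨ 2 ≤ w ∧ Z * p ≤ p ^ m + K * p ^ h) :
    p ^ m - p ^ (m - 1) - K * p ^ (h - 1) + 2 ≤ w + (p ^ m - Z) := by
  obtain ⟨X, hX⟩ : ∃ X, X = p ^ (h - 1) := ⟨_, rfl⟩
  obtain ⟨Y, hY⟩ : ∃ Y, Y = p ^ (m - 1) := ⟨_, rfl⟩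
  have hpm : p ^ m = Y * p := by rw [hY, ← pow_succ]; congr 1; omega
  have hph : p ^ h = X * p := by rw [hX, ← pow_succ]; congr 1; omega
  have hXY : X ≤ Y := hX ▸ hY ▸ Nat.pow_le_pow_right hp (by omega)
  have hKX : 1 * 1 ≤ K * X := Nat.mul_le_mul hK (hX ▸ Nat.one_le_pow _ _ hp)
  have hKXY : K * X + Y ≤ Y * p := by
    calc K * X + Y ≤ (p - 1) * Y + Y := by gcongr
      _ = Y * p := by
        rw [Nat.sub_one_mul, Nat.sub_add_cancel (Nat.le_mul_of_pos_left _ hp), mul_comm]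
  rw [hpm, hph, ← mul_assoc, ← add_mul, Nat.mul_le_mul_right_iff hp,
    Nat.mul_le_mul_right_iff hp] at hZ
  rw [hpm, ← hY, ← hX]
  omega

section ExtendedCode

variable {p m : ℕ} [Fact p.Prime] {F : Type} [Field F] [Fintype F] [Algebra (ZMod p) F]

lemma eq_zero_of_sum_smul_pow_eq_zero (hcard : Fintype.card F = p ^ m) {α : F}
    (hα : ∀ x : F, x ≠ 0 → ∃ k : ℕ, x = α ^ k) {aa : Fin m → ZMod p}
    (h : ∑ i : Fin m, aa i • α ^ (i : ℕ) = 0) : aa = 0 := by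
  have hrank : Module.finrank (ZMod p) F = m := by
    rw [Module.card_eq_pow_finrank (K := ZMod p), ZMod.card] at hcard
    exact Nat.pow_right_injective (Fact.out : p.Prime).two_le hcard
  have htop : IntermediateField.adjoin (ZMod p) {α} = ⊤ := by
    refine eq_top_iff.mpr fun x _ => ?_
    obtain rfl | hx := eq_or_ne x 0
    · exact zero_mem _
    obtain ⟨k, rfl⟩ := hα x hx
    exact pow_mem (IntermediateField.mem_adjoin_simple_self _ α) k
  have hdeg : (minpoly (ZMod p) α).natDegree = m :=
    hrank ▸ (Field.primitive_element_iff_minpoly_natDegree_eq _ α).mp htop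
  have hli := (linearIndependent_pow α).comp (Fin.cast hdeg.symm) (Fin.cast_injective _)
  funext i
  exact Fintype.linearIndependent_iff.mp hli aa h i

lemma ncard_extCode (f : F → ZMod p) (α : F) :
    (extCode p m F f α).ncard = p ^ (m + 2) := by
  let Φ : ZMod p × ZMod p × (Fin m → ZMod p) → (Fin (m + 2) ⊕ F → ZMod p) :=
    fun ⟨c, a, aa⟩ => Sum.elim (Fin.cons c (Fin.cons a aa)) fun x =>
      a * f x + Algebra.trace (ZMod p) F ((∑ i : Fin m, aa i • α ^ (i : ℕ)) * x) + a + c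
  have hrange : extCode p m F f α = Set.range Φ := by
    ext v
    constructor
    · rintro ⟨c, a, aa, rfl⟩
      exact ⟨⟨c, a, aa⟩, rfl⟩
    · rintro ⟨⟨c, a, aa⟩, rfl⟩
      exact ⟨c, a, aa, rfl⟩
  have hinj : Function.Injective Φ := by
    rintro ⟨c, a, aa⟩ ⟨c', a', aa'⟩ heq
    have hpre := congrArg (· ∘ Sum.inl) heq
    simp only [Φ, Sum.elim_comp_inl, Fin.cons_injective2.eq_iff] at hpre
    obtain ⟨rfl, rfl, rfl⟩ := hpre
    rfl
  rw [hrange, ← Nat.card_coe_set_eq, Nat.card_range_of_injective hinj, Nat.card_eq_fintype_card,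
    Fintype.card_prod, Fintype.card_prod, Fintype.card_fun, ZMod.card, Fintype.card_fin]
  ring

lemma card_zeros_mul_add_trace_mul_add_le {h K : ℕ} (hcard : Fintype.card F = p ^ m)
    {f : F → ZMod p} {εb : ℤ} (hεK : εb * ((p : ℤ) - 1) ≤ K ∧ -εb ≤ K)
    (hW : ∀ β, walsh p F f β = 0 ∨
      β ≠ 0 ∧ ∃ t, walsh p F f β = ((εb * p ^ h : ℤ) : ℂ) * eChar p t)
    {a : ZMod p} (ha : a ≠ 0) (b : F) (d : ZMod p) :
    #{x | a * f x + Algebra.trace (ZMod p) F (b * x) + d = 0} * p ≤ p ^ m ∨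
      b ≠ 0 ∧
        #{x | a * f x + Algebra.trace (ZMod p) F (b * x) + d = 0} * p ≤ p ^ m + K * p ^ h := by
  have hZ := card_zeros_mul_add_trace_mul_add f ha b d
  rw [hcard, Nat.cast_pow] at hZ
  rcases hW (-(a⁻¹ • b)) with hW0 | ⟨hγ, t, hWt⟩
  · left
    have := hZ 0 0 (by rw [hW0, Int.cast_zero, zero_mul])
    rw [zero_mul, add_zero] at this
    exact_mod_cast this.le
  · refine .inr ⟨fun hb => hγ (by rw [hb, smul_zero, neg_zero]), ?_⟩
    have hle : εb * (if -(a⁻¹ * d) = t then (p : ℤ) - 1 else -1) ≤ K := by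
      split_ifs
      · exact hεK.1
      · linarith [hεK.2]
    have hpos : (0 : ℤ) ≤ p ^ h := by positivity
    zify
    rw [hZ _ t hWt]
    nlinarith

theorem le_wtH_of_mem_extCode {h K : ℕ} (hcard : Fintype.card F = p ^ m) {α : F}
    (hα : ∀ x : F, x ≠ 0 → ∃ k : ℕ, x = α ^ k) {f : F → ZMod p} {εb : ℤ}
    (hh : 1 ≤ h) (hhm : h ≤ m) (hK : 1 ≤ K) (hKp : K ≤ p - 1)
    (hεK : εb * ((p : ℤ) - 1) ≤ K ∧ -εb ≤ K)
    (hW : ∀ β, walsh p F f β = 0 ∨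
      β ≠ 0 ∧ ∃ t, walsh p F f β = ((εb * p ^ h : ℤ) : ℂ) * eChar p t)
    {v : Fin (m + 2) ⊕ F → ZMod p} (hv : v ∈ extCode p m F f α) (hv0 : v ≠ 0) :
    p ^ m - p ^ (m - 1) - K * p ^ (h - 1) + 2 ≤ wtH v := by
  obtain ⟨c, a, aa, rfl⟩ := hv
  set b := ∑ i : Fin m, aa i • α ^ (i : ℕ) with hb_def
  have hwt := wtH_add_card_zeros fun x => a * f x + Algebra.trace (ZMod p) F (b * x) + a + c
  rw [hcard] at hwt
  rw [wtH_sum_elim, wtH_cons, wtH_cons, Nat.eq_sub_of_add_eq hwt]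
  refine pow_sub_pow_sub_add_two_le (Fact.out : p.Prime).pos hh hhm hK hKp ?_
  have haa : b ≠ 0 → 0 < wtH aa := fun hb =>
    wtH_pos_iff.mpr (by rintro rfl; simp [hb_def] at hb)
  by_cases ha : a = 0
  · subst ha
    simp only [zero_mul, zero_add, add_zero, if_true]
    by_cases hb : b = 0
    · obtain rfl := eq_zero_of_sum_smul_pow_eq_zero hcard hα (hb_def.symm.trans hb)
      have hc : c ≠ 0 := by
        rintro rfl
        refine hv0 (funext fun i => ?_)
        rcases i with i | x
        · exact Fin.cases rfl (Fin.cases rfl fun j => rfl) i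
        · simp [hb]
      simp [hb, hc]
    · refine .inl ⟨by have := haa hb; omega, ?_⟩
      rw [← hcard]
      exact_mod_cast (card_zeros_trace_mul_add hb c).le
  · simp only [add_assoc _ a c]
    rcases card_zeros_mul_add_trace_mul_add_le hcard hεK hW ha b (a + c) with hZ | ⟨hb, hZ⟩
    · exact .inl ⟨by split_ifs <;> omega, hZ⟩
    · exact .inr ⟨by have := haa hb; split_ifs <;> omega, hZ⟩

end ExtendedCode

theorem statement7_general (p m s : ℕ) [Fact p.Prime] (hp2 : p ≠ 2) (hs : s ≤ m)
    (hpar : Even (m + s)) (hms : 4 ≤ m + s)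
    (F : Type) [Field F] [Fintype F] [Algebra (ZMod p) F]
    (hcard : Fintype.card F = p ^ m)
    (α : F) (hα : ∀ x : F, x ≠ 0 → ∃ k : ℕ, x = α ^ k)
    (f : F → ZMod p) (ε : ℤ) (fstar : F → ZMod p)
    (hwr : IsWeaklyRegularPlateaued p m s F f ε fstar)
    (hbal : walsh p F f 0 = 0)
    (εb : ℤ) (hεb : εb = ε * ((-1 : ℤ) ^ ((p - 1) / 2)) ^ ((m + s) / 2)) :
    Fintype.card (Fin (m + 2) ⊕ F) = p ^ m + m + 2 ∧
    Set.ncard (extCode p m F f α) = p ^ (m + 2) ∧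
    (εb = 1 → ∀ v ∈ extCode p m F f α, v ≠ 0 →
      p ^ m - p ^ (m - 1) - (p - 1) * p ^ ((m + s) / 2 - 1) + 2 ≤ wtH v) ∧
    (εb = -1 → ∀ v ∈ extCode p m F f α, v ≠ 0 →
      p ^ m - p ^ (m - 1) - p ^ ((m + s) / 2 - 1) + 2 ≤ wtH v) := by
  have hp3 : 3 ≤ p := by have := (Fact.out : p.Prime).two_le; omega
  have hW := walsh_eq_zero_or_eq_mul_eChar hp2 (Nat.two_mul_div_two_of_even hpar).symm hwr hbal
  rw [← hεb] at hW
  refine ⟨by simp [hcard]; ring, ncard_extCode f α, ?_, ?_⟩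
  · rintro rfl v hv hv0
    refine le_wtH_of_mem_extCode hcard hα (by omega) (by omega) (by omega) le_rfl ?_ hW hv hv0
    push_cast [Nat.cast_sub (by omega : 1 ≤ p)]
    constructor <;> linarith
  · rintro rfl v hv hv0
    rw [← one_mul (p ^ ((m + s) / 2 - 1))]
    refine le_wtH_of_mem_extCode hcard hα (by omega) (by omega) le_rfl (by omega) ?_ hW hv hv0
    constructor <;> norm_num

theorem statement7 (p m s : ℕ) [Fact p.Prime] (hp2 : p ≠ 2) (hm : 1 ≤ m) (hs : s ≤ m)
    (hpar : Even (m + s)) (hms : 4 ≤ m + s)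
    (F : Type) [Field F] [Fintype F] [Algebra (ZMod p) F]
    (hcard : Fintype.card F = p ^ m)
    (α : F) (hα : ∀ x : F, x ≠ 0 → ∃ k : ℕ, x = α ^ k)
    (f : F → ZMod p) (hf0 : f 0 = 0) (ε : ℤ) (fstar : F → ZMod p)
    (hwr : IsWeaklyRegularPlateaued p m s F f ε fstar)
    (hbal : walsh p F f 0 = 0)
    (εb : ℤ) (hεb : εb = ε * ((-1 : ℤ) ^ ((p - 1) / 2)) ^ ((m + s) / 2)) :
    Fintype.card (Fin (m + 2) ⊕ F) = p ^ m + m + 2 ∧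
    Set.ncard (extCode p m F f α) = p ^ (m + 2) ∧
    (εb = 1 → ∀ v ∈ extCode p m F f α, v ≠ 0 →
      p ^ m - p ^ (m - 1) - (p - 1) * p ^ ((m + s) / 2 - 1) + 2 ≤ wtH v) ∧
    (εb = -1 → ∀ v ∈ extCode p m F f α, v ≠ 0 →
      p ^ m - p ^ (m - 1) - p ^ ((m + s) / 2 - 1) + 2 ≤ wtH v) :=
  statement7_general p m s hp2 hs hpar hms F hcard α hα f ε fstar hwr hbal εb hεb
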